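/- arXiv:1408.3719 — 3 statements merged into one kernel-verified Lean document; each statement's English description precedes it below -/
import Mathlib

section
/- Let E be a finite set, S : E → Finset E a symmetric stencil relation (j ∈ S i if and only if i ∈ S j), and t, Δt : E → ℝ with Δt i > 0 for all i, satisfying the stencil invariant: for every i ∈ E and every j ∈ S i, t j ≤ t i + Δt i. Suppose i₀ ∈ E satisfies the update criterion (for all j ∈ S i₀: t j ≤ t i₀ + Δt i₀ and t i₀ + Δt i₀ ≤ t j + Δt j) and performs its update: define t' i₀ = t i₀ + Δt i₀, t' i = t i for i ≠ i₀, and Δt' i₀ = δ for an arbitrary δ > 0 while Δt' i = Δt i for i ≠ i₀. Then the stencil invariant still holds for t' and Δt': for every i ∈ E and every j ∈ S i, t' j ≤ t' i + Δt' i. -/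
/-! Only elements whose time changes matter. If `i₀` is the updated element, an entry `j = i₀`
of another stencil is covered by the second half of the update criterion, read in the stencil of
`i₀` thanks to symmetry; the stencil of `i₀` itself is covered by the first half, since the new
future time of `i₀` only grows. -/

namespace LocalTimeStepping

variable {E α : Type*} [AddCommMonoid α] [PartialOrder α] [IsOrderedAddMonoid α]

def StencilInvariant (S : E → Finset E) (t Δt : E → α) : Prop :=
  ∀ i, ∀ j ∈ S i, t j ≤ t i + Δt i

def UpdateCriterion (S : E → Finset E) (t Δt : E → α) (i₀ : E) : Prop :=
  ∀ j ∈ S i₀, t j ≤ t i₀ + Δt i₀ ∧ t i₀ + Δt i₀ ≤ t j + Δt j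

variable [DecidableEq E]

theorem StencilInvariant.update {S : E → Finset E} (hsymm : ∀ i j, j ∈ S i → i ∈ S j)
    {t Δt : E → α} (hinv : StencilInvariant S t Δt) {i₀ : E} (hcrit : UpdateCriterion S t Δt i₀)
    {δ : α} (hδ : 0 ≤ δ) :
    StencilInvariant S (Function.update t i₀ (t i₀ + Δt i₀)) (Function.update Δt i₀ δ) := by
  intro i j hj
  rcases eq_or_ne i i₀ with rfl | hi
  · simp only [Function.update_self]
    have hj_le : Function.update t i (t i + Δt i) j ≤ t i + Δt i := by
      rcases eq_or_ne j i with rfl | hji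
      · simp
      · simpa [hji] using (hcrit j hj).1
    exact hj_le.trans (le_add_of_nonneg_right hδ)
  · simp only [Function.update_of_ne hi]
    rcases eq_or_ne j i₀ with rfl | hji
    · simpa using (hcrit i (hsymm i j hj)).2
    · simpa [hji] using hinv i j hj

end LocalTimeStepping

open LocalTimeStepping in
theorem lts_update_preserves_invariant_general
    {E : Type*}
    (S : E → Finset E) (hsym : ∀ i j : E, j ∈ S i ↔ i ∈ S j)
    (t Δt : E → ℝ)
    (hinv : ∀ i : E, ∀ j ∈ S i, t j ≤ t i + Δt i)
    (i₀ : E)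
    (hcrit : ∀ j ∈ S i₀, t j ≤ t i₀ + Δt i₀ ∧ t i₀ + Δt i₀ ≤ t j + Δt j)
    (δ : ℝ) (hδ : 0 < δ)
    (t' Δt' : E → ℝ)
    (ht'i₀ : t' i₀ = t i₀ + Δt i₀) (ht' : ∀ i : E, i ≠ i₀ → t' i = t i)
    (hΔt'i₀ : Δt' i₀ = δ) (hΔt' : ∀ i : E, i ≠ i₀ → Δt' i = Δt i) :
    ∀ i : E, ∀ j ∈ S i, t' j ≤ t' i + Δt' i := by
  classical
  have ht'_eq : t' = Function.update t i₀ (t i₀ + Δt i₀) :=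
    Function.eq_update_iff.mpr ⟨ht'i₀, ht'⟩
  have hΔt'_eq : Δt' = Function.update Δt i₀ δ :=
    Function.eq_update_iff.mpr ⟨hΔt'i₀, hΔt'⟩
  rw [ht'_eq, hΔt'_eq]
  exact StencilInvariant.update (fun i j => (hsym i j).mp) hinv hcrit hδ.le

/-- **The LTS update preserves the stencil invariant.**
If the symmetric-stencil invariant `t j ≤ t i + Δt i` (for `j ∈ S i`) holds, the element `i₀`
satisfies the update criterion and performs its update (its current time becomes its old
future time and it receives an arbitrary new positive timestep `δ`), then the stencil
invariant still holds for the updated times `t'` and timesteps `Δt'`. -/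
theorem lts_update_preserves_invariant
    {E : Type*} [Fintype E]
    (S : E → Finset E) (hsym : ∀ i j : E, j ∈ S i ↔ i ∈ S j)
    (t Δt : E → ℝ) (hΔt : ∀ i, 0 < Δt i)
    (hinv : ∀ i : E, ∀ j ∈ S i, t j ≤ t i + Δt i)
    (i₀ : E)
    (hcrit : ∀ j ∈ S i₀, t j ≤ t i₀ + Δt i₀ ∧ t i₀ + Δt i₀ ≤ t j + Δt j)
    (δ : ℝ) (hδ : 0 < δ)
    (t' Δt' : E → ℝ)
    (ht'i₀ : t' i₀ = t i₀ + Δt i₀) (ht' : ∀ i : E, i ≠ i₀ → t' i = t i)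
    (hΔt'i₀ : Δt' i₀ = δ) (hΔt' : ∀ i : E, i ≠ i₀ → Δt' i = Δt i) :
    ∀ i : E, ∀ j ∈ S i, t' j ≤ t' i + Δt' i :=
  lts_update_preserves_invariant_general S hsym t Δt hinv i₀ hcrit δ hδ t' Δt' ht'i₀ ht' hΔt'i₀ hΔt'
end

section
/- Let E be a finite set of elements, i₀ ∈ E, and N ⊆ E a set of neighbors of i₀ with i₀ ∉ N. Let V, V' : E → ℝ with V' k = V k for k ≠ i₀ (cell volumes before and after the update), Q, M : E → ℝ^ν (cell averages and memory variables), and G : E → ℝ^ν (edge fluxes, supported on N). Define the single-element LTS update: Q' i₀ satisfies V' i₀ • Q' i₀ = V i₀ • Q i₀ − ∑_{j ∈ N} G j + M i₀, and Q' k = Q k for k ≠ i₀; the memory variables are updated by M' i₀ = 0, M' j = M j + G j for j ∈ N, and M' k = M k otherwise. Then the total conserved quantity is exactly preserved: ∑_{k ∈ E} (V' k • Q' k + M' k) = ∑_{k ∈ E} (V k • Q k + M k). -/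
/-!
The update only moves the amount `∑ j ∈ N, G j` out of the total of cell `i₀` and distributes
it over the memory variables of the neighbours, each `j ∈ N` receiving `G j`; every other
summand is unchanged, so the sum over all elements is invariant.
-/

open Finset

theorem Finset.sum_eq_sum_of_transfer {ι A : Type*} [Fintype ι] [AddCommGroup A]
    (f g G : ι → A) (i₀ : ι) (N : Finset ι) (hi₀ : i₀ ∉ N)
    (hsource : f i₀ = g i₀ - ∑ j ∈ N, G j)
    (htarget : ∀ j ∈ N, f j = g j + G j)
    (hrest : ∀ k, k ∉ N → k ≠ i₀ → f k = g k) :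
    ∑ k, f k = ∑ k, g k := by
  classical
  rw [← sub_eq_zero, ← sum_sub_distrib]
  have hsupp : ∀ k ∈ univ, k ∉ insert i₀ N → f k - g k = 0 := fun k _ hk => by
    rw [mem_insert, not_or] at hk
    rw [hrest k hk.2 hk.1, sub_self]
  have hgain : ∑ j ∈ N, (f j - g j) = ∑ j ∈ N, G j :=
    sum_congr rfl fun j hj => by rw [htarget j hj, add_sub_cancel_left]
  rw [← sum_subset (subset_univ _) hsupp, sum_insert hi₀, hsource, hgain]
  abel

theorem lts_memory_update_conservative_general
    {E : Type*} [Fintype E] (ν : ℕ)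
    (i₀ : E) (N : Finset E) (hi₀ : i₀ ∉ N)
    (V V' : E → ℝ) (hV' : ∀ k : E, k ≠ i₀ → V' k = V k)
    (Q Q' M M' G : E → (Fin ν → ℝ))
    (hupd : V' i₀ • Q' i₀ = V i₀ • Q i₀ - (∑ j ∈ N, G j) + M i₀)
    (hQ' : ∀ k : E, k ≠ i₀ → Q' k = Q k)
    (hM'i₀ : M' i₀ = 0)
    (hM'N : ∀ j ∈ N, M' j = M j + G j)
    (hM' : ∀ k : E, k ∉ N → k ≠ i₀ → M' k = M k) :
    ∑ k : E, (V' k • Q' k + M' k) = ∑ k : E, (V k • Q k + M k) := by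
  have hcell : ∀ k, k ≠ i₀ → V' k • Q' k = V k • Q k := fun k hk => by rw [hV' k hk, hQ' k hk]
  refine sum_eq_sum_of_transfer _ _ G i₀ N hi₀ ?_ (fun j hj => ?_) fun k hk hki₀ => ?_
  · rw [hupd, hM'i₀]
    abel
  · have hji₀ : j ≠ i₀ := fun h => hi₀ (h ▸ hj)
    rw [hcell j hji₀, hM'N j hj, add_assoc]
  · rw [hcell k hki₀, hM' k hk hki₀]

/-- **Exact conservation of the single-element LTS update with memory variables.**
When element `i₀` updates its volume-weighted cell average by subtracting the edge fluxes
`G j` towards its neighbors `N` and adding its accumulated memory variable `M i₀`, and when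
afterwards its memory variable is reset to zero while each flux `G j` is accumulated into
the memory variable of the corresponding neighbor, the total conserved quantity
`∑ k (V k • Q k + M k)` is exactly preserved. -/
theorem lts_memory_update_conservative
    {E : Type*} [Fintype E] (ν : ℕ)
    (i₀ : E) (N : Finset E) (hi₀ : i₀ ∉ N)
    (V V' : E → ℝ) (hV' : ∀ k : E, k ≠ i₀ → V' k = V k)
    (Q Q' M M' G : E → (Fin ν → ℝ))
    (hGsupp : ∀ j : E, j ∉ N → G j = 0)
    (hupd : V' i₀ • Q' i₀ = V i₀ • Q i₀ - (∑ j ∈ N, G j) + M i₀)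
    (hQ' : ∀ k : E, k ≠ i₀ → Q' k = Q k)
    (hM'i₀ : M' i₀ = 0)
    (hM'N : ∀ j ∈ N, M' j = M j + G j)
    (hM' : ∀ k : E, k ∉ N → k ≠ i₀ → M' k = M k) :
    ∑ k : E, (V' k • Q' k + M' k) = ∑ k : E, (V k • Q k + M k) :=
  lts_memory_update_conservative_general ν i₀ N hi₀ V V' hV' Q Q' M M' G hupd hQ' hM'i₀ hM'N hM'
end

section
/- Fix γ > 1 and ε ∈ ℝ, and define on ℝ² (with center at the origin and r² = x² + y²): the temperature perturbation δT(x, y) = −((γ − 1) ε² / (8 γ π²)) · exp(1 − r²), the rotational velocity field u(x, y) = −y φ(x,y), v(x, y) = x φ(x,y) with φ(x,y) = (ε / (2π)) exp((1 − r²)/2), the density ρ = (1 + δT)^{1/(γ−1)}, the pressure p = (1 + δT)^{γ/(γ−1)}, and the total energy density ρE = p/(γ−1) + ½ ρ (u² + v²). Assume 1 + δT(x,y) > 0 for all (x,y) ∈ ℝ². Then these fields form an exact steady solution of the 2D compressible Euler equations: at every point, ∂_x(ρu) + ∂_y(ρv) = 0, ∂_x(ρu² + p) + ∂_y(ρuv)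 = 0, ∂_x(ρuv) + ∂_y(ρv² + p) = 0, and ∂_x(u(ρE + p)) + ∂_y(v(ρE + p)) = 0. -/
/-!
A rigidly rotating radial flow `u = -y W(r²)`, `v = x W(r²)` with density `R(r²)` and pressure
`P(r²)` makes every flux of the form `(-y H(r²), x H(r²))` divergence-free, which settles mass
and energy. The two momentum residuals are `x (2P' - R W²)` and `y (2P' - R W²)` (derivatives in
`s = r²`), so the flow is steady exactly when `2 dP/ds = R W²`, i.e. `dp/dr = ρ v_θ² / r`.
For the vortex, `p = T^{γ/(γ-1)}` and `ρ = T^{1/(γ-1)}` give `dp = γ/(γ-1) ρ dT`, and the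
amplitude of `δT` is chosen so that this is `½ ρ W² ds`.
-/

open Real

section RotatingRadialFlow

variable {F : ℝ → ℝ} {x y : ℝ}

lemma hasDerivAt_comp_sq_add_sq_left (hF : DifferentiableAt ℝ F (x ^ 2 + y ^ 2)) :
    HasDerivAt (fun s => F (s ^ 2 + y ^ 2)) (deriv F (x ^ 2 + y ^ 2) * (2 * x)) x := by
  have h := hF.hasDerivAt.comp x ((hasDerivAt_pow 2 x).add_const (y ^ 2))
  simpa [Function.comp_def] using h

lemma hasDerivAt_comp_sq_add_sq_right (hF : DifferentiableAt ℝ F (x ^ 2 + y ^ 2)) :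
    HasDerivAt (fun s => F (x ^ 2 + s ^ 2)) (deriv F (x ^ 2 + y ^ 2) * (2 * y)) y := by
  have h := hF.hasDerivAt.comp y ((hasDerivAt_pow 2 y).const_add (x ^ 2))
  simpa [Function.comp_def] using h

lemma deriv_add_deriv_rotational_eq_zero (hF : DifferentiableAt ℝ F (x ^ 2 + y ^ 2)) :
    deriv (fun s => -y * F (s ^ 2 + y ^ 2)) x + deriv (fun s => x * F (x ^ 2 + s ^ 2)) y = 0 := by
  rw [((hasDerivAt_comp_sq_add_sq_left hF).const_mul (-y)).deriv,
    ((hasDerivAt_comp_sq_add_sq_right hF).const_mul x).deriv]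
  ring

variable {G P : ℝ → ℝ}

lemma deriv_add_deriv_momentum_flux_fst (hG : DifferentiableAt ℝ G (x ^ 2 + y ^ 2))
    (hP : DifferentiableAt ℝ P (x ^ 2 + y ^ 2)) :
    deriv (fun s => y ^ 2 * G (s ^ 2 + y ^ 2) + P (s ^ 2 + y ^ 2)) x
      + deriv (fun s => -(x * s) * G (x ^ 2 + s ^ 2)) y
      = x * (2 * deriv P (x ^ 2 + y ^ 2) - G (x ^ 2 + y ^ 2)) := by
  rw [(((hasDerivAt_comp_sq_add_sq_left hG).const_mul (y ^ 2)).fun_add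
      (hasDerivAt_comp_sq_add_sq_left hP)).deriv,
    (((hasDerivAt_id' y).const_mul x).fun_neg.fun_mul (hasDerivAt_comp_sq_add_sq_right hG)).deriv]
  ring

lemma deriv_add_deriv_momentum_flux_snd (hG : DifferentiableAt ℝ G (x ^ 2 + y ^ 2))
    (hP : DifferentiableAt ℝ P (x ^ 2 + y ^ 2)) :
    deriv (fun s => -(s * y) * G (s ^ 2 + y ^ 2)) x
      + deriv (fun s => x ^ 2 * G (x ^ 2 + s ^ 2) + P (x ^ 2 + s ^ 2)) y
      = y * (2 * deriv P (x ^ 2 + y ^ 2) - G (x ^ 2 + y ^ 2)) := by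
  rw [(((hasDerivAt_id' x).mul_const y).fun_neg.fun_mul (hasDerivAt_comp_sq_add_sq_left hG)).deriv,
    (((hasDerivAt_comp_sq_add_sq_right hG).const_mul (x ^ 2)).fun_add
      (hasDerivAt_comp_sq_add_sq_right hP)).deriv]
  ring

end RotatingRadialFlow

theorem steady_euler_of_rotating_radial (γ : ℝ) (R P W : ℝ → ℝ) (u v ρ p ρE : ℝ → ℝ → ℝ)
    (hu : ∀ x y, u x y = -y * W (x ^ 2 + y ^ 2)) (hv : ∀ x y, v x y = x * W (x ^ 2 + y ^ 2))
    (hρ : ∀ x y, ρ x y = R (x ^ 2 + y ^ 2)) (hp : ∀ x y, p x y = P (x ^ 2 + y ^ 2))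
    (hρE : ∀ x y, ρE x y = p x y / (γ - 1) + (1 / 2) * ρ x y * (u x y ^ 2 + v x y ^ 2))
    (x y : ℝ) (hR : DifferentiableAt ℝ R (x ^ 2 + y ^ 2))
    (hP : DifferentiableAt ℝ P (x ^ 2 + y ^ 2)) (hW : DifferentiableAt ℝ W (x ^ 2 + y ^ 2))
    (hbalance : 2 * deriv P (x ^ 2 + y ^ 2) = R (x ^ 2 + y ^ 2) * W (x ^ 2 + y ^ 2) ^ 2) :
      deriv (fun s => ρ s y * u s y) x + deriv (fun s => ρ x s * v x s) y = 0 ∧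
      deriv (fun s => ρ s y * u s y ^ 2 + p s y) x
        + deriv (fun s => ρ x s * u x s * v x s) y = 0 ∧
      deriv (fun s => ρ s y * u s y * v s y) x
        + deriv (fun s => ρ x s * v x s ^ 2 + p x s) y = 0 ∧
      deriv (fun s => u s y * (ρE s y + p s y)) x
        + deriv (fun s => v x s * (ρE x s + p x s)) y = 0 := by
  have hRW : DifferentiableAt ℝ (fun s => R s * W s) (x ^ 2 + y ^ 2) := hR.mul hW
  have hRW2 : DifferentiableAt ℝ (fun s => R s * W s ^ 2) (x ^ 2 + y ^ 2) := hR.mul (hW.pow 2)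
  have hH : DifferentiableAt ℝ
      (fun s => W s * (P s / (γ - 1) + 1 / 2 * R s * (s * W s ^ 2) + P s)) (x ^ 2 + y ^ 2) := by
    fun_prop
  have hmass := deriv_add_deriv_rotational_eq_zero hRW
  have henergy := deriv_add_deriv_rotational_eq_zero hH
  have hmomx := deriv_add_deriv_momentum_flux_fst hRW2 hP
  have hmomy := deriv_add_deriv_momentum_flux_snd hRW2 hP
  rw [hbalance, sub_self, mul_zero] at hmomx hmomy
  simp only [hρE, hu, hv, hρ, hp]
  refine ⟨?_, ?_, ?_, ?_⟩
  · convert hmass using 3 <;> (funext s; ring)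
  · convert hmomx using 3 <;> (funext s; ring)
  · convert hmomy using 3 <;> (funext s; ring)
  · convert henergy using 3 <;> (funext s; ring)

lemma HasDerivAt.rpow_div_sub_one {T : ℝ → ℝ} {T' s γ : ℝ} (hT : HasDerivAt T T' s)
    (hTs : T s ≠ 0) (hγ : γ ≠ 1) :
    HasDerivAt (fun s => T s ^ (γ / (γ - 1))) (γ / (γ - 1) * T s ^ (1 / (γ - 1)) * T') s := by
  have hexp : γ / (γ - 1) - 1 = 1 / (γ - 1) := by
    field_simp [sub_ne_zero.mpr hγ]
    ring
  convert hT.rpow_const (p := γ / (γ - 1)) (Or.inl hTs) using 1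
  rw [hexp]
  ring

-- The vortex profiles as functions of `s = r²`.
noncomputable def vortexTemperature (γ ε s : ℝ) : ℝ :=
  1 + -((γ - 1) * ε ^ 2 / (8 * γ * π ^ 2)) * exp (1 - s)

noncomputable def vortexAngularVelocity (ε s : ℝ) : ℝ := ε / (2 * π) * exp ((1 - s) / 2)

lemma hasDerivAt_vortexTemperature (γ ε s : ℝ) :
    HasDerivAt (vortexTemperature γ ε)
      ((γ - 1) * ε ^ 2 / (8 * γ * π ^ 2) * exp (1 - s)) s :=
  ((((hasDerivAt_id' s).const_sub 1).exp.const_mul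
    (-((γ - 1) * ε ^ 2 / (8 * γ * π ^ 2)))).const_add 1).congr_deriv (by ring)

lemma vortex_radial_balance {γ ε s : ℝ} (hγ : 1 < γ) (hT : 0 < vortexTemperature γ ε s) :
    2 * deriv (fun s => vortexTemperature γ ε s ^ (γ / (γ - 1))) s
      = vortexTemperature γ ε s ^ (1 / (γ - 1)) * vortexAngularVelocity ε s ^ 2 := by
  rw [((hasDerivAt_vortexTemperature γ ε s).rpow_div_sub_one hT.ne' hγ.ne').deriv,
    vortexAngularVelocity, mul_pow, sq (exp _), ← exp_add, add_halves]
  have hγ1 : γ - 1 ≠ 0 := sub_ne_zero.mpr hγ.ne'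
  have hγ0 : γ ≠ 0 := by linarith
  field_simp
  ring

/-- **The isentropic vortex of Hu and Shu is an exact steady solution of the 2D
compressible Euler equations.** With temperature perturbation `δT`, rotational velocity
`(u,v) = φ(r)(−y, x)`, density `ρ = (1+δT)^{1/(γ−1)}`, pressure `p = (1+δT)^{γ/(γ−1)}` and
total energy `ρE = p/(γ−1) + ½ρ(u²+v²)`, all four stationary conservation laws hold at
every point of `ℝ²`. -/
theorem isentropic_vortex_steady_euler_solution
    (γ ε : ℝ) (hγ : 1 < γ)
    (δT φ u v ρ p ρE : ℝ → ℝ → ℝ)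
    (hδT : ∀ x y : ℝ, δT x y =
      -((γ - 1) * ε ^ 2 / (8 * γ * Real.pi ^ 2)) * Real.exp (1 - (x ^ 2 + y ^ 2)))
    (hφ : ∀ x y : ℝ, φ x y = (ε / (2 * Real.pi)) * Real.exp ((1 - (x ^ 2 + y ^ 2)) / 2))
    (hu : ∀ x y : ℝ, u x y = -y * φ x y)
    (hv : ∀ x y : ℝ, v x y = x * φ x y)
    (hρ : ∀ x y : ℝ, ρ x y = (1 + δT x y) ^ (1 / (γ - 1)))
    (hp : ∀ x y : ℝ, p x y = (1 + δT x y) ^ (γ / (γ - 1)))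
    (hρE : ∀ x y : ℝ, ρE x y = p x y / (γ - 1) + (1 / 2) * ρ x y * (u x y ^ 2 + v x y ^ 2))
    (hpos : ∀ x y : ℝ, 0 < 1 + δT x y) :
    ∀ x y : ℝ,
      deriv (fun s => ρ s y * u s y) x + deriv (fun s => ρ x s * v x s) y = 0 ∧
      deriv (fun s => ρ s y * u s y ^ 2 + p s y) x
        + deriv (fun s => ρ x s * u x s * v x s) y = 0 ∧
      deriv (fun s => ρ s y * u s y * v s y) x
        + deriv (fun s => ρ x s * v x s ^ 2 + p x s) y = 0 ∧
      deriv (fun s => u s y * (ρE s y + p s y)) x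
        + deriv (fun s => v x s * (ρE x s + p x s)) y = 0 := by
  intro x y
  have hT : ∀ x y, 1 + δT x y = vortexTemperature γ ε (x ^ 2 + y ^ 2) := fun x y => by
    rw [hδT]; rfl
  have hW : ∀ x y, φ x y = vortexAngularVelocity ε (x ^ 2 + y ^ 2) := hφ
  have hTpos : 0 < vortexTemperature γ ε (x ^ 2 + y ^ 2) := hT x y ▸ hpos x y
  have hTdiff := (hasDerivAt_vortexTemperature γ ε (x ^ 2 + y ^ 2)).differentiableAt
  exact steady_euler_of_rotating_radial γ (fun s => vortexTemperature γ ε s ^ (1 / (γ - 1)))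
    (fun s => vortexTemperature γ ε s ^ (γ / (γ - 1))) (vortexAngularVelocity ε) u v ρ p ρE
    (fun x y => by rw [hu, hW]) (fun x y => by rw [hv, hW]) (fun x y => by rw [hρ, hT])
    (fun x y => by rw [hp, hT]) hρE x y (hTdiff.rpow_const (Or.inl hTpos.ne'))
    (hTdiff.rpow_const (Or.inl hTpos.ne')) (by unfold vortexAngularVelocity; fun_prop)
    (vortex_radial_balance hγ hTpos)
end
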